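/- For every integer N ≥ 1, every integer n ≥ 0, and every real x ≠ 0, U_n^{(N+1)}(x) = (1/(2^N · N!)) · Σ_{i=1}^{N} a(i,N) · Σ_{l=0}^{n} C(2N+n-l-i-1, n-l) · U_{l+i}(x) · x^{i+l-2N-n} · (l+i)_i, where x^{i+l-2N-n} is an integer (possibly negative) power of x. -/

import Mathlib

/-- The falling factorial `(y)_k = y(y-1)⋯(y-k+1)` of a real number, `(y)_0 = 1`. -/
noncomputable def fallingFactorial (y : ℝ) (k : ℕ) : ℝ :=
  ∏ j ∈ Finset.range k, (y - (j : ℝ))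

/-- `D = 1 - 2x·t + t²` as a formal power series in `t` over `ℝ`. -/
noncomputable def Dser (x : ℝ) : PowerSeries ℝ :=
  1 - PowerSeries.C (2 * x) * PowerSeries.X + PowerSeries.X ^ 2

/-- The higher-order Chebyshev polynomial of the second kind `U_n^{(α)}(x)`,
the `n`-th coefficient of `(D⁻¹)^α`. -/
noncomputable def chebU (x : ℝ) (α n : ℕ) : ℝ :=
  PowerSeries.coeff n ((Dser x)⁻¹ ^ α)

/-!
Write `G = x - t`, so that `D' = -2G` and `(D⁻¹)' = 2 G D⁻²`. The operator
`f ↦ G f' + (2N-1) f` sends `G^(2N-1) D^-(N+1)` to `2(N+1) G^(2N+1) D^-(N+2)`, and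
`G^(i-1) (D⁻¹)^(i)` to `(2N-i) G^(i-1) (D⁻¹)^(i) + G^i (D⁻¹)^(i+1)`, which is exactly the
recursion of `a(i,N)`. Induction on `N` therefore gives
`2^N N! G^(2N-1) D^-(N+1) = Σ_i a(i,N) G^(i-1) (D⁻¹)^(i)`.
For `x ≠ 0` the series `G` is invertible, `G^-m = Σ_k C(m+k-1,k) x^(-m-k) t^k`; dividing by
`G^(2N-1)` and comparing coefficients of `t^n`, where `(D⁻¹)^(i)` has `l`-th coefficient
`(l+i)_i U_{l+i}(x)`, gives the formula.
-/

open PowerSeries Finset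
open scoped Nat

lemma sum_Icc_one_eq_sum_range {M : Type*} [AddCommMonoid M] (f : ℕ → M) (N : ℕ) :
    ∑ i ∈ Icc 1 N, f i = ∑ j ∈ range N, f (j + 1) := by
  rw [range_eq_Ico, sum_Ico_add', ← Ico_add_one_right_eq_Icc, zero_add]

section Field

variable {K : Type*} [Field K]

/-- The expansion of `(x - t)⁻ᵐ` in powers of `t`. -/
noncomputable def subXInvPow (x : K) (m : ℕ) : K⟦X⟧ :=
  mk fun k => ((m + k - 1).choose k : K) * x ^ (-(m : ℤ) - k)

lemma subXInvPow_zero (x : K) : subXInvPow x 0 = 1 := by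
  ext (_ | k) <;> simp [subXInvPow, coeff_one]

lemma C_sub_X_mul_subXInvPow_succ {x : K} (hx : x ≠ 0) (m : ℕ) :
    (C x - X) * subXInvPow x (m + 1) = subXInvPow x m := by
  ext k
  rw [sub_mul, map_sub, coeff_C_mul]
  rcases k with _ | k
  · simp only [subXInvPow, coeff_mk, coeff_zero_X_mul, Nat.choose_zero_right]
    rw [show -((m + 1 : ℕ) : ℤ) - (0 : ℕ) = -(m : ℤ) - (0 : ℕ) - 1 by push_cast; ring,
      zpow_sub_one₀ hx]
    field_simp
    ring
  · have hexp : -((m + 1 : ℕ) : ℤ) - (k + 1 : ℕ) = -(m : ℤ) - (k + 1 : ℕ) - 1 := by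
      push_cast; ring
    have hexp' : -((m + 1 : ℕ) : ℤ) - (k : ℕ) = -(m : ℤ) - (k + 1 : ℕ) := by push_cast; ring
    simp only [subXInvPow, coeff_succ_X_mul, coeff_mk]
    rw [show m + 1 + (k + 1) - 1 = m + k + 1 by omega, show m + 1 + k - 1 = m + k by omega,
      show m + (k + 1) - 1 = m + k by omega, Nat.choose_succ_succ, hexp, hexp', zpow_sub_one₀ hx]
    push_cast
    field_simp
    ring

lemma C_sub_X_pow_mul_subXInvPow_add {x : K} (hx : x ≠ 0) (j m : ℕ) :
    (C x - X) ^ j * subXInvPow x (m + j) = subXInvPow x m := by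
  induction j with
  | zero => simp
  | succ j ih =>
    rw [pow_succ', mul_assoc, ← add_assoc, mul_left_comm, C_sub_X_mul_subXInvPow_succ hx, ih]

lemma coeff_iterate_derivative_mul_subXInvPow (f : K⟦X⟧) (x : K) (i m n : ℕ) :
    coeff n ((d⁄dX K)^[i] f * subXInvPow x m) =
      ∑ l ∈ range (n + 1), (l + 1).ascFactorial i * coeff (l + i) f *
        ((m + (n - l) - 1).choose (n - l) * x ^ (-(m : ℤ) - (n - l : ℕ))) := by
  simp [coeff_mul, Nat.sum_antidiagonal_eq_sum_range_succ_mk, coeff_iterate_derivative,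
    subXInvPow]

end Field

section CommRing

variable {K : Type*} [CommRing K]

noncomputable def ladderOp (x c : K) : K⟦X⟧ →ₗ[K] K⟦X⟧ :=
  LinearMap.mulLeft K (C x - X) ∘ₗ (d⁄dX K).toLinearMap + c • LinearMap.id

lemma ladderOp_apply (x c : K) (f : K⟦X⟧) :
    ladderOp x c f = (C x - X) * d⁄dX K f + c • f := rfl

lemma C_sub_X_mul_derivative_pow (x : K) (j : ℕ) :
    (C x - X) * d⁄dX K ((C x - X) ^ j) = -(j : K⟦X⟧) * (C x - X) ^ j := by
  induction j with
  | zero => simp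
  | succ j ih =>
    simp only [pow_succ, Derivation.leibniz, smul_eq_mul, map_sub, derivative_C, derivative_X]
    push_cast
    linear_combination (C x - X) * ih

lemma ladderOp_C_sub_X_pow_mul (x c : K) (j : ℕ) (g : K⟦X⟧) :
    ladderOp x c ((C x - X) ^ j * g) =
      (c - j) • ((C x - X) ^ j * g) + (C x - X) ^ (j + 1) * d⁄dX K g := by
  rw [ladderOp_apply, Derivation.leibniz, smul_eq_mul, smul_eq_mul, smul_eq_C_mul, smul_eq_C_mul,
    map_sub, map_natCast]
  linear_combination g * C_sub_X_mul_derivative_pow x j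

end CommRing

lemma fallingFactorial_natCast_add (l i : ℕ) :
    fallingFactorial ((l : ℝ) + i) i = (l + 1).ascFactorial i := by
  rw [fallingFactorial, ← descPochhammer_eval_eq_prod_range, ← Nat.cast_add,
    descPochhammer_eval_eq_descFactorial, Nat.add_descFactorial_eq_ascFactorial]

section Chebyshev

variable (x : ℝ)

lemma derivative_Dser : d⁄dX ℝ (Dser x) = -2 * (C x - X) := by
  simp only [Dser, map_add, map_sub, Derivation.map_one_eq_zero, Derivation.leibniz_pow,
    Derivation.leibniz, derivative_C, derivative_X, smul_eq_mul]
  simp only [map_mul, map_ofNat]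
  ring

lemma derivative_inv_Dser_pow (m : ℕ) :
    d⁄dX ℝ ((Dser x)⁻¹ ^ (m + 1)) =
      (2 * (m + 1) : ℝ) • ((C x - X) * (Dser x)⁻¹ ^ (m + 2)) := by
  rw [Derivation.leibniz_pow, derivative_inv', derivative_Dser, smul_eq_C_mul, nsmul_eq_mul,
    smul_eq_mul]
  simp only [map_mul, map_add, map_ofNat, map_natCast, map_one, Nat.add_sub_cancel]
  push_cast
  ring

lemma ladderOp_C_sub_X_pow_mul_inv_Dser_pow (k m : ℕ) :
    ladderOp x k ((C x - X) ^ k * (Dser x)⁻¹ ^ (m + 1)) =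
      (2 * (m + 1) : ℝ) • ((C x - X) ^ (k + 2) * (Dser x)⁻¹ ^ (m + 2)) := by
  rw [ladderOp_C_sub_X_pow_mul, sub_self, zero_smul, zero_add, derivative_inv_Dser_pow,
    mul_smul_comm]
  ring_nf

end Chebyshev

structure IsChebCoeffFamily (a : ℕ → ℕ → ℝ) : Prop where
  one_one : a 1 1 = 1
  one_succ : ∀ N : ℕ, 1 ≤ N → a 1 (N + 1) = (2 * (N : ℝ) - 1) * a 1 N
  succ_succ_self : ∀ N : ℕ, 1 ≤ N → a (N + 1) (N + 1) = a N N
  succ : ∀ N i : ℕ, 2 ≤ i → i ≤ N →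
    a i (N + 1) = a (i - 1) N + (2 * (N : ℝ) - (i : ℝ)) * a i N

namespace IsChebCoeffFamily

variable {a : ℕ → ℕ → ℝ}

lemma sum_range_smul_step {M : Type*} [AddCommGroup M] [Module ℝ M] (ha : IsChebCoeffFamily a)
    (f : ℕ → M) {N : ℕ} (hN : 1 ≤ N) :
    ∑ j ∈ range N, a (j + 1) N • ((2 * N - 1 - j : ℝ) • f j + f (j + 1)) =
      ∑ j ∈ range (N + 1), a (j + 1) (N + 1) • f j := by
  obtain ⟨N, rfl⟩ := Nat.exists_eq_add_of_le' hN
  have hbot :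
      a 1 (N + 1) • (2 * ((N + 1 : ℕ) : ℝ) - 1 - (0 : ℕ)) • f 0 = a 1 (N + 2) • f 0 := by
    rw [ha.one_succ (N + 1) (by omega), smul_smul]
    push_cast
    ring_nf
  have hmid : ∀ j ∈ range N,
      a (j + 2) (N + 1) • (2 * ((N + 1 : ℕ) : ℝ) - 1 - (j + 1 : ℕ)) • f (j + 1) +
        a (j + 1) (N + 1) • f (j + 1) = a (j + 2) (N + 2) • f (j + 1) := by
    intro j hj
    rw [ha.succ (N + 1) (j + 2) (by omega) (by have := mem_range.mp hj; omega), smul_smul,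
      ← add_smul]
    push_cast
    ring_nf
  have htop : a (N + 1) (N + 1) • f (N + 1) = a (N + 2) (N + 2) • f (N + 1) := by
    rw [ha.succ_succ_self (N + 1) (by omega)]
  simp only [smul_add, sum_add_distrib]
  rw [sum_range_succ' _ N, sum_range_succ _ N, sum_range_succ' _ (N + 1), sum_range_succ _ N,
    ← sum_congr rfl hmid, sum_add_distrib, hbot, htop]
  abel

lemma smul_C_sub_X_pow_mul_inv_Dser_pow (ha : IsChebCoeffFamily a) (x : ℝ) {N : ℕ}
    (hN : 1 ≤ N) :
    (2 ^ N * N ! : ℝ) • ((C x - X) ^ (2 * N - 1) * (Dser x)⁻¹ ^ (N + 1)) =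
      ∑ j ∈ range N, a (j + 1) N • ((C x - X) ^ j * (d⁄dX ℝ)^[j + 1] (Dser x)⁻¹) := by
  induction N, hN using Nat.le_induction with
  | base =>
    rw [sum_range_one, zero_add, Function.iterate_one, derivative_inv', derivative_Dser,
      ha.one_one, one_smul, smul_eq_C_mul]
    norm_num [map_ofNat]
    ring
  | succ N hN ih =>
    have hc : (2 * N - 1 : ℝ) = ((2 * N - 1 : ℕ) : ℝ) := by
      rw [Nat.cast_sub (by omega)]
      push_cast
      ring
    have h := congrArg (ladderOp x (2 * N - 1)) ih
    rw [map_smul, map_sum, hc, ladderOp_C_sub_X_pow_mul_inv_Dser_pow] at h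
    simp only [map_smul, ladderOp_C_sub_X_pow_mul, ← Function.iterate_succ_apply' (d⁄dX ℝ),
      ← hc] at h
    rw [ha.sum_range_smul_step _ hN, smul_smul] at h
    rw [← h, pow_succ, Nat.factorial_succ, show 2 * (N + 1) - 1 = 2 * N - 1 + 2 by omega]
    push_cast
    ring_nf

lemma smul_inv_Dser_pow_eq_sum (ha : IsChebCoeffFamily a) {x : ℝ} (hx : x ≠ 0) {N : ℕ}
    (hN : 1 ≤ N) :
    (2 ^ N * N ! : ℝ) • (Dser x)⁻¹ ^ (N + 1) =
      ∑ j ∈ range N, a (j + 1) N •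
        ((d⁄dX ℝ)^[j + 1] (Dser x)⁻¹ * subXInvPow x (2 * N - 1 - j)) := by
  have hcancel : ∀ j ≤ 2 * N - 1,
      (C x - X) ^ j * subXInvPow x (2 * N - 1) = subXInvPow x (2 * N - 1 - j) := fun j hj => by
    simpa only [Nat.sub_add_cancel hj] using C_sub_X_pow_mul_subXInvPow_add hx j (2 * N - 1 - j)
  have h := congrArg (· * subXInvPow x (2 * N - 1)) (ha.smul_C_sub_X_pow_mul_inv_Dser_pow x hN)
  simp only [smul_mul_assoc, sum_mul] at h
  rw [mul_right_comm ((C x - X) ^ _), hcancel _ le_rfl, Nat.sub_self, subXInvPow_zero,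
    one_mul] at h
  rw [h]
  refine sum_congr rfl fun j hj => ?_
  rw [mul_right_comm ((C x - X) ^ j), hcancel j (by have := mem_range.mp hj; omega), mul_comm]

end IsChebCoeffFamily

/-- for `N ≥ 1`, `n ≥ 0` and real `x ≠ 0`,
`U_n^{(N+1)}(x) = (1/(2^N N!)) Σ_{i=1}^N a(i,N) Σ_{l=0}^n
  C(2N+n-l-i-1, n-l) U_{l+i}(x) x^{i+l-2N-n} (l+i)_i`,
where `a` is the family defined by the recursion `a(1,1) = 1`,
`a(1,N+1) = (2N-1)a(1,N)`, `a(N+1,N+1) = a(N,N)`,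
`a(i,N+1) = a(i-1,N) + (2N-i)a(i,N)` for `2 ≤ i ≤ N`. -/
theorem stmt5
    (a : ℕ → ℕ → ℝ)
    (ha11 : a 1 1 = 1)
    (ha1 : ∀ N : ℕ, 1 ≤ N → a 1 (N + 1) = (2 * (N : ℝ) - 1) * a 1 N)
    (hadiag : ∀ N : ℕ, 1 ≤ N → a (N + 1) (N + 1) = a N N)
    (harec : ∀ N i : ℕ, 2 ≤ i → i ≤ N →
      a i (N + 1) = a (i - 1) N + (2 * (N : ℝ) - (i : ℝ)) * a i N)
    (x : ℝ) (hx : x ≠ 0) (N n : ℕ) (hN : 1 ≤ N) :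
    chebU x (N + 1) n =
      (1 / (2 ^ N * (Nat.factorial N : ℝ))) *
        ∑ i ∈ Finset.Icc 1 N, a i N *
          ∑ l ∈ Finset.range (n + 1),
            (Nat.choose (2 * N + n - l - i - 1) (n - l) : ℝ) *
              chebU x 1 (l + i) *
              x ^ ((i : ℤ) + (l : ℤ) - 2 * (N : ℤ) - (n : ℤ)) *
              fallingFactorial ((l : ℝ) + (i : ℝ)) i := by
  have ha : IsChebCoeffFamily a := ⟨ha11, ha1, hadiag, harec⟩
  have hc : (2 ^ N * N ! : ℝ) ≠ 0 := by positivity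
  have hcoeff := congrArg (coeff n) (ha.smul_inv_Dser_pow_eq_sum hx hN)
  rw [coeff_smul, map_sum, smul_eq_mul] at hcoeff
  rw [one_div_mul_eq_div, eq_div_iff hc, mul_comm, chebU, hcoeff, sum_Icc_one_eq_sum_range]
  refine sum_congr rfl fun j hj => ?_
  rw [coeff_smul, smul_eq_mul, coeff_iterate_derivative_mul_subXInvPow]
  congr 1
  refine sum_congr rfl fun l hl => ?_
  have hj : j < N := mem_range.mp hj
  have hl : l ≤ n := Nat.lt_succ_iff.mp (mem_range.mp hl)
  rw [fallingFactorial_natCast_add, chebU, pow_one,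
    show 2 * N + n - l - (j + 1) - 1 = 2 * N - 1 - j + (n - l) - 1 by omega,
    show ((j + 1 : ℕ) : ℤ) + l - 2 * N - n = -((2 * N - 1 - j : ℕ) : ℤ) - (n - l : ℕ) by omega]
  ring
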